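/- arXiv:1906.11959 — 4 statements merged into one kernel-verified Lean document; each statement's English description precedes it below -/
import Mathlib

section
/- Let K be a complex Hilbert space and let D be a countable set of bounded linear operators on K. Then there exists a closed separable subspace K₁ of K such that T(K₁) ⊆ K₁ and T*(K₁) ⊆ K₁ for every T ∈ D, and such that for every bounded operator A belonging to the closure of D in the operator-norm topology, the restriction of A to K₁ (a bounded operator on K₁) has operator norm equal to ‖A‖. -/
/-!
Close the countable set of witnesses `x` with `‖x‖ < 1` and `‖T x‖` close to `‖T‖`, `T ∈ D`,
under the countable monoid generated by `D` and its adjoints, and take the closed span `K₁`.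
It is separable and invariant under `D ∪ D*`, and it carries the norm of every `T ∈ D`.
Both "`K₁` is invariant under `A`" and "`‖A|K₁‖ = ‖A‖`" are closed conditions on `A` in the
operator-norm topology, so they pass from `D` to its closure.
-/

open Set TopologicalSpace

namespace ContinuousLinearMap

variable {𝕜 E F : Type*} [SeminormedAddCommGroup F]

def IsNormingSet [NontriviallyNormedField 𝕜] [SeminormedAddCommGroup E] [NormedSpace 𝕜 E]
    [NormedSpace 𝕜 F] (f : E →L[𝕜] F) (s : Set E) : Prop :=
  ∀ r < ‖f‖, ∃ x ∈ s, ‖x‖ < 1 ∧ r < ‖f x‖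

theorem exists_countable_isNormingSet [DenselyNormedField 𝕜] [NormedAddCommGroup E]
    [NormedSpace 𝕜 E] [NormedSpace 𝕜 F] (f : E →L[𝕜] F) :
    ∃ s : Set E, s.Countable ∧ f.IsNormingSet s := by
  have hr (n : ℕ) : ‖f‖ - 1 / (n + 1) < ‖f‖ := sub_lt_self _ Nat.one_div_pos_of_nat
  choose x hx_lt hfx using fun n => f.exists_lt_apply_of_lt_opNorm (hr n)
  refine ⟨range x, countable_range x, fun r hr => ?_⟩
  obtain ⟨n, hn⟩ := exists_nat_one_div_lt (sub_pos.2 hr)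
  exact ⟨x n, mem_range_self n, hx_lt n, by linarith [hfx n]⟩

variable [NontriviallyNormedField 𝕜] [SeminormedAddCommGroup E] [NormedSpace 𝕜 E]
  [NormedSpace 𝕜 F]

theorem IsNormingSet.norm_domRestrict {f : E →L[𝕜] F} {s : Set E} (hf : f.IsNormingSet s)
    {p : Submodule 𝕜 E} (hs : s ⊆ p) : ‖f.domRestrict p‖ = ‖f‖ := by
  refine le_antisymm ?_ (le_of_forall_lt fun r hr => ?_)
  · calc ‖f.domRestrict p‖ ≤ ‖f‖ * ‖p.subtypeL‖ := opNorm_comp_le f p.subtypeL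
      _ ≤ ‖f‖ * 1 := by gcongr; exact Submodule.norm_subtypeL_le p
      _ = ‖f‖ := mul_one _
  · obtain ⟨x, hxs, hx_lt, hfx⟩ := hf r hr
    calc r < ‖f.domRestrict p ⟨x, hs hxs⟩‖ := hfx
      _ ≤ ‖f.domRestrict p‖ * 1 := le_opNorm_of_le _ hx_lt.le
      _ = ‖f.domRestrict p‖ := mul_one _

theorem isClosed_setOf_norm_domRestrict_eq (p : Submodule 𝕜 E) :
    IsClosed {f : E →L[𝕜] F | ‖f.domRestrict p‖ = ‖f‖} :=
  isClosed_eq (((compL 𝕜 p E F).flip p.subtypeL).continuous.norm) continuous_norm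

theorem isClosed_setOf_mapsTo (s : Set E) {t : Set F} (ht : IsClosed t) :
    IsClosed {f : E →L[𝕜] F | MapsTo f s t} := by
  simp only [MapsTo, ofPred_forall]
  exact isClosed_biInter fun x _ => ht.preimage (continuous_eval_const x)

theorem norm_restrict {p : Submodule 𝕜 E} {q : Submodule 𝕜 F} {f : E →L[𝕜] F}
    (hf : ∀ x ∈ p, f x ∈ q) : ‖f.restrict hf‖ = ‖f.domRestrict p‖ :=
  opNorm_ext _ _ fun _ => rfl

end ContinuousLinearMap

section InvariantSubspace

variable {𝕜 E : Type*} [NontriviallyNormedField 𝕜] [SeminormedAddCommGroup E] [NormedSpace 𝕜 E]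

theorem Submodule.mapsTo_topologicalClosure_span (T : E →L[𝕜] E) {s : Set E}
    (hs : MapsTo T s s) :
    MapsTo T (span 𝕜 s).topologicalClosure (span 𝕜 s).topologicalClosure := by
  have hspan : MapsTo T (span 𝕜 s) (span 𝕜 s) := fun x hx =>
    ((map_span_le (T : E →ₗ[𝕜] E) s _).2 fun y hy => subset_span (hs hy)) ⟨x, hx, rfl⟩
  simpa only [topologicalClosure_coe] using hspan.closure T.continuous

theorem exists_isClosed_isSeparable_invariant_submodule [SeparableSpace 𝕜] {S : Set (E →L[𝕜] E)}
    (hS : S.Countable) {s : Set E} (hs : s.Countable) :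
    ∃ p : Submodule 𝕜 E, IsClosed (p : Set E) ∧ IsSeparable (p : Set E) ∧ s ⊆ p ∧
      ∀ T ∈ S, MapsTo T p p := by
  have hM : (Submonoid.closure S : Set (E →L[𝕜] E)).Countable := by
    have := hS.to_subtype
    rw [Submonoid.closure_eq_mrange, MonoidHom.coe_mrange]
    exact countable_range _
  set M := Submonoid.closure S
  set G := image2 (fun (U : E →L[𝕜] E) x => U x) M s
  refine ⟨(Submodule.span 𝕜 G).topologicalClosure, Submodule.isClosed_topologicalClosure _,
    ?_, fun x hx => ?_, fun T hT => Submodule.mapsTo_topologicalClosure_span T ?_⟩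
  · rw [Submodule.topologicalClosure_coe]
    exact (hM.image2 hs _).isSeparable.span.closure
  · exact Submodule.le_topologicalClosure _ (Submodule.subset_span ⟨1, M.one_mem, x, hx, rfl⟩)
  · rintro _ ⟨U, hU, x, hx, rfl⟩
    exact ⟨T * U, M.mul_mem (Submonoid.subset_closure hT) hU, x, hx, rfl⟩

end InvariantSubspace

open ContinuousLinearMap in
/-- given a countable set `D` of bounded operators on a Hilbert space `K`,
there is a closed separable subspace `K₁` of `K`, invariant under every `T ∈ D` and its
adjoint, such that the restriction to `K₁` of any operator `A` in the operator-norm closure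
of `D` has the same operator norm as `A`. -/
theorem stmt1 (K : Type*) [NormedAddCommGroup K] [InnerProductSpace ℂ K] [CompleteSpace K]
    (D : Set (K →L[ℂ] K)) (hD : D.Countable) :
    ∃ K₁ : Submodule ℂ K,
      IsClosed (K₁ : Set K) ∧
      TopologicalSpace.IsSeparable (K₁ : Set K) ∧
      (∀ T ∈ D, (∀ x ∈ K₁, T x ∈ K₁) ∧
        (∀ x ∈ K₁, ContinuousLinearMap.adjoint T x ∈ K₁)) ∧
      (∀ A ∈ closure D, ∃ B : K₁ →L[ℂ] K₁,
        (∀ x : K₁, (B x : K) = A (x : K)) ∧ ‖B‖ = ‖A‖) := by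
  choose N hN_countable hN using fun T : K →L[ℂ] K => T.exists_countable_isNormingSet
  obtain ⟨K₁, hclosed, hsep, hN_sub, hinv⟩ :=
    exists_isClosed_isSeparable_invariant_submodule (hD.union (hD.image adjoint))
      (hD.biUnion fun T _ => hN_countable T)
  have hD_inv : D ⊆ {A | MapsTo A K₁ K₁} := fun T hT => hinv T (.inl hT)
  have hD_norm : D ⊆ {A | ‖A.domRestrict K₁‖ = ‖A‖} := fun T hT =>
    (hN T).norm_domRestrict ((subset_biUnion_of_mem hT).trans hN_sub)
  refine ⟨K₁, hclosed, hsep, fun T hT => ⟨hinv T (.inl hT), hinv _ (.inr ⟨T, hT, rfl⟩)⟩,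
    fun A hA => ?_⟩
  have hA_inv := closure_minimal hD_inv (isClosed_setOf_mapsTo _ hclosed) hA
  have hA_norm := closure_minimal hD_norm (isClosed_setOf_norm_domRestrict_eq K₁) hA
  exact ⟨A.restrict hA_inv, fun _ => rfl, (norm_restrict hA_inv).trans hA_norm⟩
end

section
/- Let Ω be a bounded open subset of ℂ^d and let 𝒞 be a class of generic matrix d-tuples on Ω subordinate to Ω. Then there exist a complex Hilbert space K and a unital algebra homomorphism π : H^∞(𝒞) → B(K) such that ‖π(φ)‖ = ‖φ‖_𝒞 for every φ ∈ H^∞(𝒞). -/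
open scoped ComplexConjugate

noncomputable section

/-- A generic matrix `d`-tuple on `Ω`: a `d`-tuple of commuting `n × n` matrices having a
basis of joint eigenvectors `v j` with distinct joint eigenvalues `lam j ∈ Ω`.  Such a tuple
is completely determined by the eigendata `(n, lam, v)`. -/
structure GenTuple (d : ℕ) (Ω : Set (Fin d → ℂ)) where
  n : ℕ
  npos : 0 < n
  lam : Fin n → (Fin d → ℂ)
  v : Fin n → (Fin n → ℂ)
  indep : LinearIndependent ℂ v
  inj : Function.Injective lam
  mem : ∀ j, lam j ∈ Ω

open scoped ENNReal NNReal in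
theorem two_toReal_pos : 0 < (2 : ℝ≥0∞).toReal := by norm_num

namespace GenTuple

variable {d : ℕ} {Ω : Set (Fin d → ℂ)}

/-- The matrix whose columns are the eigenvectors `v j`. -/
def P (T : GenTuple d Ω) : Matrix (Fin T.n) (Fin T.n) ℂ :=
  Matrix.of fun i j => T.v j i

/-- `φ(T)`: the unique matrix with `φ(T) vⱼ = φ(λⱼ) vⱼ` for all `j`. -/
def evalM (T : GenTuple d Ω) (φ : (Fin d → ℂ) → ℂ) : Matrix (Fin T.n) (Fin T.n) ℂ :=
  T.P * Matrix.diagonal (fun j => φ (T.lam j)) * T.P⁻¹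

/-- `‖φ(T)‖`, the operator norm of `φ(T)` on the Euclidean space `ℂ^n`. -/
def opNorm (T : GenTuple d Ω) (φ : (Fin d → ℂ) → ℂ) : ℝ :=
  ‖Matrix.toEuclideanCLM (𝕜 := ℂ) (T.evalM φ)‖

end GenTuple

/-- The set of values `‖φ(T)‖` as `T` ranges over the class `𝒞`. -/
def normSet {d : ℕ} {Ω : Set (Fin d → ℂ)} (𝒞 : Set (GenTuple d Ω))
    (φ : (Fin d → ℂ) → ℂ) : Set ℝ :=
  (fun T : GenTuple d Ω => T.opNorm φ) '' 𝒞

/-- `‖φ‖_𝒞 = sup_{T ∈ 𝒞} ‖φ(T)‖`. -/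
def cNorm {d : ℕ} {Ω : Set (Fin d → ℂ)} (𝒞 : Set (GenTuple d Ω))
    (φ : (Fin d → ℂ) → ℂ) : ℝ :=
  sSup (normSet 𝒞 φ)

/-- `φ ∈ H^∞(𝒞)`: `φ` is holomorphic on `Ω` and `‖φ‖_𝒞 < ∞`. -/
def MemHinf {d : ℕ} (Ω : Set (Fin d → ℂ)) (𝒞 : Set (GenTuple d Ω))
    (φ : (Fin d → ℂ) → ℂ) : Prop :=
  DifferentiableOn ℂ φ Ω ∧ BddAbove (normSet 𝒞 φ)

/-- `𝒞` is subordinate to `Ω`: `𝒞` is nonempty and contains, for every `λ ∈ Ω`, the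
`1 × 1` tuple `(λ¹, …, λᵈ)`. -/
def Subordinate {d : ℕ} (Ω : Set (Fin d → ℂ)) (𝒞 : Set (GenTuple d Ω)) : Prop :=
  𝒞.Nonempty ∧ ∀ lam ∈ Ω, ∃ T ∈ 𝒞, T.n = 1 ∧ ∀ j, T.lam j = lam


namespace GenTuple

variable {d : ℕ} {Ω : Set (Fin d → ℂ)}

theorem isUnit_P (T : GenTuple d Ω) : IsUnit T.P :=
  Matrix.linearIndependent_cols_iff_isUnit.mp T.indep

theorem P_inv_mul (T : GenTuple d Ω) : T.P⁻¹ * T.P = 1 :=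
  Matrix.nonsing_inv_mul _ ((Matrix.isUnit_iff_isUnit_det _).mp T.isUnit_P)

theorem P_mul_inv (T : GenTuple d Ω) : T.P * T.P⁻¹ = 1 :=
  Matrix.mul_nonsing_inv _ ((Matrix.isUnit_iff_isUnit_det _).mp T.isUnit_P)

theorem evalM_one (T : GenTuple d Ω) : T.evalM 1 = 1 := by
  unfold evalM
  have : (Matrix.diagonal fun j => (1 : (Fin d → ℂ) → ℂ) (T.lam j)) = 1 := by
    rw [show (fun j => (1 : (Fin d → ℂ) → ℂ) (T.lam j)) = (fun _ => (1 : ℂ)) from rfl]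
    exact Matrix.diagonal_one
  rw [this, Matrix.mul_one, P_mul_inv]

theorem evalM_add (T : GenTuple d Ω) (φ χ : (Fin d → ℂ) → ℂ) :
    T.evalM (φ + χ) = T.evalM φ + T.evalM χ := by
  unfold evalM
  have : (Matrix.diagonal fun j => (φ + χ) (T.lam j)) =
      (Matrix.diagonal fun j => φ (T.lam j)) + (Matrix.diagonal fun j => χ (T.lam j)) := by
    rw [Matrix.diagonal_add]; rfl
  rw [this, Matrix.mul_add, Matrix.add_mul]

theorem evalM_smul (T : GenTuple d Ω) (c : ℂ) (φ : (Fin d → ℂ) → ℂ) :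
    T.evalM (c • φ) = c • T.evalM φ := by
  unfold evalM
  have h0 : (fun j => (c • φ) (T.lam j)) = c • (fun j => φ (T.lam j)) := rfl
  rw [h0, Matrix.diagonal_smul, Matrix.mul_smul, Matrix.smul_mul]

theorem evalM_mul (T : GenTuple d Ω) (φ χ : (Fin d → ℂ) → ℂ) :
    T.evalM (φ * χ) = T.evalM φ * T.evalM χ := by
  have key : ∀ X : Matrix (Fin T.n) (Fin T.n) ℂ, T.P⁻¹ * (T.P * X) = X := fun X => by
    rw [← Matrix.mul_assoc, T.P_inv_mul, Matrix.one_mul]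
  unfold evalM
  have : (Matrix.diagonal fun j => (φ * χ) (T.lam j)) =
      (Matrix.diagonal fun j => φ (T.lam j)) * (Matrix.diagonal fun j => χ (T.lam j)) := by
    rw [Matrix.diagonal_mul_diagonal]; rfl
  rw [this]
  simp only [Matrix.mul_assoc, key]

/-- `φ(T)` as a continuous linear map on Euclidean space. -/
def clm (T : GenTuple d Ω) (φ : (Fin d → ℂ) → ℂ) :
    EuclideanSpace ℂ (Fin T.n) →L[ℂ] EuclideanSpace ℂ (Fin T.n) :=
  Matrix.toEuclideanCLM (𝕜 := ℂ) (T.evalM φ)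

theorem opNorm_def (T : GenTuple d Ω) (φ : (Fin d → ℂ) → ℂ) : T.opNorm φ = ‖T.clm φ‖ := rfl

theorem clm_one (T : GenTuple d Ω) : T.clm 1 = 1 := by
  rw [clm, evalM_one, map_one]

theorem clm_add (T : GenTuple d Ω) (φ χ : (Fin d → ℂ) → ℂ) :
    T.clm (φ + χ) = T.clm φ + T.clm χ := by
  rw [clm, evalM_add, map_add]; rfl

theorem clm_mul (T : GenTuple d Ω) (φ χ : (Fin d → ℂ) → ℂ) :
    T.clm (φ * χ) = T.clm φ * T.clm χ := by
  rw [clm, evalM_mul, map_mul]; rfl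

theorem clm_smul (T : GenTuple d Ω) (c : ℂ) (φ : (Fin d → ℂ) → ℂ) :
    T.clm (c • φ) = c • T.clm φ := by
  rw [clm, evalM_smul, map_smul]; rfl

end GenTuple

section AuxHinf

open scoped ENNReal NNReal

variable {d : ℕ} {Ω : Set (Fin d → ℂ)} {𝒞 : Set (GenTuple d Ω)}

theorem memHinf_one : MemHinf Ω 𝒞 1 := by
  constructor
  · exact differentiableOn_const 1
  · refine ⟨1, ?_⟩
    rintro r ⟨T, hT, rfl⟩
    show T.opNorm 1 ≤ 1
    rw [GenTuple.opNorm_def, GenTuple.clm_one, ContinuousLinearMap.one_def]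
    exact ContinuousLinearMap.norm_id_le

theorem memHinf_add {φ χ : (Fin d → ℂ) → ℂ} (hφ : MemHinf Ω 𝒞 φ) (hχ : MemHinf Ω 𝒞 χ) :
    MemHinf Ω 𝒞 (φ + χ) := by
  obtain ⟨Cφ, hCφ⟩ := hφ.2
  obtain ⟨Cχ, hCχ⟩ := hχ.2
  refine ⟨hφ.1.add hχ.1, ⟨Cφ + Cχ, ?_⟩⟩
  rintro r ⟨T, hT, rfl⟩
  show T.opNorm (φ + χ) ≤ _
  rw [GenTuple.opNorm_def, GenTuple.clm_add]
  exact le_trans (norm_add_le _ _)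
    (add_le_add (hCφ ⟨T, hT, rfl⟩) (hCχ ⟨T, hT, rfl⟩))

theorem memHinf_mul {φ χ : (Fin d → ℂ) → ℂ} (hφ : MemHinf Ω 𝒞 φ) (hχ : MemHinf Ω 𝒞 χ) :
    MemHinf Ω 𝒞 (φ * χ) := by
  obtain ⟨Cφ, hCφ⟩ := hφ.2
  obtain ⟨Cχ, hCχ⟩ := hχ.2
  refine ⟨hφ.1.mul hχ.1, ⟨Cφ * Cχ, ?_⟩⟩
  rintro r ⟨T, hT, rfl⟩
  show T.opNorm (φ * χ) ≤ _
  rw [GenTuple.opNorm_def, GenTuple.clm_mul]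
  refine le_trans (norm_mul_le _ _) (mul_le_mul (hCφ ⟨T, hT, rfl⟩) (hCχ ⟨T, hT, rfl⟩)
    (norm_nonneg _) (le_trans (norm_nonneg (T.clm φ)) (hCφ ⟨T, hT, rfl⟩)))

theorem memHinf_smul (c : ℂ) {φ : (Fin d → ℂ) → ℂ} (hφ : MemHinf Ω 𝒞 φ) :
    MemHinf Ω 𝒞 (c • φ) := by
  obtain ⟨Cφ, hCφ⟩ := hφ.2
  refine ⟨hφ.1.const_smul c, ⟨‖c‖ * Cφ, ?_⟩⟩
  rintro r ⟨T, hT, rfl⟩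
  show T.opNorm (c • φ) ≤ _
  rw [GenTuple.opNorm_def, GenTuple.clm_smul]
  exact le_trans (le_of_eq (norm_smul c (T.clm φ)))
    (mul_le_mul_of_nonneg_left (hCφ ⟨T, hT, rfl⟩) (norm_nonneg c))

theorem exists_blockDiag (𝒞 : Set (GenTuple d Ω)) (h𝒞ne : 𝒞.Nonempty)
    (φ : (Fin d → ℂ) → ℂ) (h : MemHinf Ω 𝒞 φ) :
    ∃ B : lp (fun T : 𝒞 => EuclideanSpace ℂ (Fin T.1.n)) 2 →L[ℂ]
          lp (fun T : 𝒞 => EuclideanSpace ℂ (Fin T.1.n)) 2,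
      (∀ (x : lp (fun T : 𝒞 => EuclideanSpace ℂ (Fin T.1.n)) 2) (i : 𝒞),
        B x i = (i : GenTuple d Ω).clm φ (x i)) ∧ ‖B‖ = cNorm 𝒞 φ := by
  classical
  set E : 𝒞 → Type := fun T => EuclideanSpace ℂ (Fin T.1.n) with hE
  have hq : 0 < (2 : ℝ≥0∞).toReal := two_toReal_pos
  have hub : ∀ (i : 𝒞), ‖(i : GenTuple d Ω).clm φ‖ ≤ cNorm 𝒞 φ := fun i =>
    le_csSup h.2 ⟨i.1, i.2, rfl⟩
  have hC0 : 0 ≤ cNorm 𝒞 φ := by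
    obtain ⟨T0, hT0⟩ := h𝒞ne
    exact le_trans (norm_nonneg _) (hub ⟨T0, hT0⟩)
  have hb : ∀ (x : lp E 2) (i : 𝒞), ‖(i : GenTuple d Ω).clm φ (x i)‖ ≤ cNorm 𝒞 φ * ‖x i‖ :=
    fun x i => le_trans ((i.1.clm φ).le_opNorm (x i))
      (mul_le_mul_of_nonneg_right (hub i) (norm_nonneg _))
  have hmem : ∀ x : lp E 2, Memℓp (fun i : 𝒞 => (i : GenTuple d Ω).clm φ (x i)) 2 := by
    intro x
    apply memℓp_gen
    have hsx : Summable fun i : 𝒞 => cNorm 𝒞 φ ^ (2 : ℝ≥0∞).toReal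
        * ‖x i‖ ^ (2 : ℝ≥0∞).toReal := ((lp.memℓp x).summable hq).mul_left _
    refine Summable.of_nonneg_of_le (fun i => Real.rpow_nonneg (norm_nonneg _) _)
      (fun i => ?_) hsx
    calc ‖(i : GenTuple d Ω).clm φ (x i)‖ ^ (2 : ℝ≥0∞).toReal
        ≤ (cNorm 𝒞 φ * ‖x i‖) ^ (2 : ℝ≥0∞).toReal :=
          Real.rpow_le_rpow (norm_nonneg _) (hb x i) hq.le
      _ = cNorm 𝒞 φ ^ (2 : ℝ≥0∞).toReal * ‖x i‖ ^ (2 : ℝ≥0∞).toReal :=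
          Real.mul_rpow hC0 (norm_nonneg _)
  let L : lp E 2 →ₗ[ℂ] lp E 2 :=
    { toFun := fun x => ⟨fun i => (i : GenTuple d Ω).clm φ (x i), hmem x⟩
      map_add' := fun x y => by
        apply lp.ext
        funext i
        simp [lp.coeFn_add, Pi.add_apply]
        rfl
      map_smul' := fun c x => by
        apply lp.ext
        funext i
        simp [lp.coeFn_smul, Pi.smul_apply] }
  have hLapp : ∀ (x : lp E 2) (i : 𝒞), L x i = (i : GenTuple d Ω).clm φ (x i) := fun _ _ => rfl
  have hLb : ∀ x : lp E 2, ‖L x‖ ≤ cNorm 𝒞 φ * ‖x‖ := by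
    intro x
    apply lp.norm_le_of_forall_sum_le hq (mul_nonneg hC0 (norm_nonneg x))
    intro s
    calc ∑ i ∈ s, ‖L x i‖ ^ (2 : ℝ≥0∞).toReal
        ≤ ∑ i ∈ s, cNorm 𝒞 φ ^ (2 : ℝ≥0∞).toReal * ‖x i‖ ^ (2 : ℝ≥0∞).toReal := by
          refine Finset.sum_le_sum fun i _ => ?_
          rw [hLapp]
          calc ‖(i : GenTuple d Ω).clm φ (x i)‖ ^ (2 : ℝ≥0∞).toReal
              ≤ (cNorm 𝒞 φ * ‖x i‖) ^ (2 : ℝ≥0∞).toReal :=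
                Real.rpow_le_rpow (norm_nonneg _) (hb x i) hq.le
            _ = _ := Real.mul_rpow hC0 (norm_nonneg _)
      _ = cNorm 𝒞 φ ^ (2 : ℝ≥0∞).toReal * ∑ i ∈ s, ‖x i‖ ^ (2 : ℝ≥0∞).toReal := by
          rw [Finset.mul_sum]
      _ ≤ cNorm 𝒞 φ ^ (2 : ℝ≥0∞).toReal * ‖x‖ ^ (2 : ℝ≥0∞).toReal := by
          refine mul_le_mul_of_nonneg_left ?_ (Real.rpow_nonneg hC0 _)
          exact sum_le_hasSum s (fun i _ => Real.rpow_nonneg (norm_nonneg _) _)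
            (lp.hasSum_norm hq x)
      _ = (cNorm 𝒞 φ * ‖x‖) ^ (2 : ℝ≥0∞).toReal := (Real.mul_rpow hC0 (norm_nonneg _)).symm
  refine ⟨L.mkContinuous (cNorm 𝒞 φ) hLb, fun x i => rfl, ?_⟩
  set B := L.mkContinuous (cNorm 𝒞 φ) hLb with hB
  have hBapp : ∀ (x : lp E 2) (i : 𝒞), B x i = (i : GenTuple d Ω).clm φ (x i) := fun _ _ => rfl
  have hBle : ‖B‖ ≤ cNorm 𝒞 φ := LinearMap.mkContinuous_norm_le L hC0 hLb
  have hsingle : ∀ (i : 𝒞) (v : E i), B (lp.single 2 i v) = lp.single 2 i (i.1.clm φ v) := by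
    intro i v
    apply lp.ext
    funext j
    by_cases hj : j = i
    · subst hj
      rw [hBapp]
      simp [lp.single_apply_self]
    · rw [hBapp]
      rw [lp.single_apply_ne _ _ _ hj, lp.single_apply_ne _ _ _ hj, map_zero]
  have hnsingle : ∀ (i : 𝒞) (v : E i), ‖(lp.single 2 i v : lp E 2)‖ = ‖v‖ := by
    intro i v
    have := lp.norm_single (E := E) (p := 2) (by norm_num) i v
    simpa using this
  have hge : ∀ (i : 𝒞), ‖(i : GenTuple d Ω).clm φ‖ ≤ ‖B‖ := by
    intro i
    refine ContinuousLinearMap.opNorm_le_bound _ (norm_nonneg B) fun v => ?_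
    have h1 := B.le_opNorm (lp.single 2 i v)
    rw [hsingle i v, hnsingle, hnsingle] at h1
    exact h1
  refine le_antisymm hBle (csSup_le (h𝒞ne.image _) ?_)
  rintro r ⟨T, hT, rfl⟩
  exact hge ⟨T, hT⟩

end AuxHinf

section PiMap

open scoped ENNReal NNReal

variable {d : ℕ} {Ω : Set (Fin d → ℂ)}

/-- The block-diagonal operator `⊕_{T ∈ 𝒞} φ(T)` on the Hilbert sum, or `0` if `φ ∉ H^∞`. -/
def piMap (𝒞 : Set (GenTuple d Ω)) (h𝒞ne : 𝒞.Nonempty) (φ : (Fin d → ℂ) → ℂ) :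
    lp (fun T : 𝒞 => EuclideanSpace ℂ (Fin T.1.n)) 2 →L[ℂ]
      lp (fun T : 𝒞 => EuclideanSpace ℂ (Fin T.1.n)) 2 :=
  @dite _ (MemHinf Ω 𝒞 φ) (Classical.dec _) (fun h => (exists_blockDiag 𝒞 h𝒞ne φ h).choose)
    (fun _ => 0)

theorem piMap_apply (𝒞 : Set (GenTuple d Ω)) (h𝒞ne : 𝒞.Nonempty) {φ : (Fin d → ℂ) → ℂ}
    (h : MemHinf Ω 𝒞 φ) (x : lp (fun T : 𝒞 => EuclideanSpace ℂ (Fin T.1.n)) 2) (i : 𝒞) :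
    piMap 𝒞 h𝒞ne φ x i = (i : GenTuple d Ω).clm φ (x i) := by
  rw [piMap, dif_pos h]
  exact (exists_blockDiag 𝒞 h𝒞ne φ h).choose_spec.1 x i

theorem piMap_norm (𝒞 : Set (GenTuple d Ω)) (h𝒞ne : 𝒞.Nonempty) {φ : (Fin d → ℂ) → ℂ}
    (h : MemHinf Ω 𝒞 φ) : ‖piMap 𝒞 h𝒞ne φ‖ = cNorm 𝒞 φ := by
  rw [piMap, dif_pos h]
  exact (exists_blockDiag 𝒞 h𝒞ne φ h).choose_spec.2

theorem piMap_one (𝒞 : Set (GenTuple d Ω)) (h𝒞ne : 𝒞.Nonempty) :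
    piMap 𝒞 h𝒞ne 1 = 1 := by
  refine ContinuousLinearMap.ext fun x => lp.ext (funext fun i => ?_)
  rw [piMap_apply 𝒞 h𝒞ne memHinf_one x i, GenTuple.clm_one]
  rfl

theorem piMap_add (𝒞 : Set (GenTuple d Ω)) (h𝒞ne : 𝒞.Nonempty) {φ χ : (Fin d → ℂ) → ℂ}
    (hφ : MemHinf Ω 𝒞 φ) (hχ : MemHinf Ω 𝒞 χ) :
    piMap 𝒞 h𝒞ne (φ + χ) = piMap 𝒞 h𝒞ne φ + piMap 𝒞 h𝒞ne χ := by
  refine ContinuousLinearMap.ext fun x => lp.ext (funext fun i => ?_)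
  rw [ContinuousLinearMap.add_apply]
  rw [show ∀ u v : lp (fun T : 𝒞 => EuclideanSpace ℂ (Fin T.1.n)) 2,
    (u + v) i = u i + v i from fun u v => rfl]
  rw [piMap_apply 𝒞 h𝒞ne (memHinf_add hφ hχ) x i, piMap_apply 𝒞 h𝒞ne hφ x i,
    piMap_apply 𝒞 h𝒞ne hχ x i, GenTuple.clm_add, ContinuousLinearMap.add_apply]

theorem piMap_mul (𝒞 : Set (GenTuple d Ω)) (h𝒞ne : 𝒞.Nonempty) {φ χ : (Fin d → ℂ) → ℂ}
    (hφ : MemHinf Ω 𝒞 φ) (hχ : MemHinf Ω 𝒞 χ) :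
    piMap 𝒞 h𝒞ne (φ * χ) = piMap 𝒞 h𝒞ne φ * piMap 𝒞 h𝒞ne χ := by
  refine ContinuousLinearMap.ext fun x => lp.ext (funext fun i => ?_)
  rw [ContinuousLinearMap.mul_apply, piMap_apply 𝒞 h𝒞ne (memHinf_mul hφ hχ) x i,
    piMap_apply 𝒞 h𝒞ne hφ _ i, piMap_apply 𝒞 h𝒞ne hχ x i, GenTuple.clm_mul,
    ContinuousLinearMap.mul_apply]

theorem piMap_smul (𝒞 : Set (GenTuple d Ω)) (h𝒞ne : 𝒞.Nonempty) (c : ℂ)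
    {φ : (Fin d → ℂ) → ℂ} (hφ : MemHinf Ω 𝒞 φ) :
    piMap 𝒞 h𝒞ne (c • φ) = c • piMap 𝒞 h𝒞ne φ := by
  refine ContinuousLinearMap.ext fun x => lp.ext (funext fun i => ?_)
  rw [ContinuousLinearMap.smul_apply]
  rw [show ∀ v : lp (fun T : 𝒞 => EuclideanSpace ℂ (Fin T.1.n)) 2,
    (c • v) i = c • v i from fun v => rfl]
  rw [piMap_apply 𝒞 h𝒞ne (memHinf_smul c hφ) x i, piMap_apply 𝒞 h𝒞ne hφ x i,
    GenTuple.clm_smul, ContinuousLinearMap.smul_apply]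

end PiMap

/-- there is a Hilbert space `K` and a unital algebra homomorphism
`π : H^∞(𝒞) → B(K)` with `‖π(φ)‖ = ‖φ‖_𝒞` for all `φ ∈ H^∞(𝒞)`. -/
theorem stmt4 {d : ℕ} (Ω : Set (Fin d → ℂ)) (hΩopen : IsOpen Ω)
    (hΩbdd : Bornology.IsBounded Ω)
    (𝒞 : Set (GenTuple d Ω)) (h𝒞 : Subordinate Ω 𝒞) :
    ∃ (K : Type) (_ : NormedAddCommGroup K) (_ : InnerProductSpace ℂ K)
      (_ : CompleteSpace K) (π : ((Fin d → ℂ) → ℂ) → (K →L[ℂ] K)),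
      π 1 = 1 ∧
      (∀ φ χ, MemHinf Ω 𝒞 φ → MemHinf Ω 𝒞 χ → π (φ + χ) = π φ + π χ) ∧
      (∀ φ χ, MemHinf Ω 𝒞 φ → MemHinf Ω 𝒞 χ → π (φ * χ) = π φ * π χ) ∧
      (∀ (c : ℂ) (φ), MemHinf Ω 𝒞 φ → π (c • φ) = c • π φ) ∧
      (∀ φ, MemHinf Ω 𝒞 φ → ‖π φ‖ = cNorm 𝒞 φ) := by
  obtain ⟨h𝒞ne, -⟩ := h𝒞
  exact ⟨lp (fun T : 𝒞 => EuclideanSpace ℂ (Fin T.1.n)) 2, inferInstance, inferInstance,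
    inferInstance, piMap 𝒞 h𝒞ne, piMap_one 𝒞 h𝒞ne,
    fun φ χ hφ hχ => piMap_add 𝒞 h𝒞ne hφ hχ,
    fun φ χ hφ hχ => piMap_mul 𝒞 h𝒞ne hφ hχ,
    fun c φ hφ => piMap_smul 𝒞 h𝒞ne c hφ,
    fun φ hφ => piMap_norm 𝒞 h𝒞ne hφ⟩
end
end

section
/- Let Ω be a bounded open subset of ℂ^d and let S be a set of holomorphic functions from Ω to the open unit disk 𝔻. Suppose φ : Ω → ℂ satisfies: for every kernel k ∈ K_S (taking X = Ω), the kernel (z,w) ↦ (1 − φ(z) conj(φ(w))) k(z,w) is positive. Then for every generic matrix d-tuple T on Ω with ‖ψ(T)‖ ≤ 1 for all ψ ∈ S, one has ‖φ(T)‖ ≤ 1. -/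
open scoped ComplexConjugate

noncomputable section

open scoped ComplexOrder

/-- A kernel `k` is positive on the set `X`: for all finite lists of points of `X` and all
scalars `c`, `Σᵢⱼ cᵢ conj(cⱼ) k(zᵢ, zⱼ) ≥ 0`. -/
def IsPosKernelOn {α : Type*} (X : Set α) (k : α → α → ℂ) : Prop :=
  ∀ (m : ℕ) (z : Fin m → α), (∀ i, z i ∈ X) → ∀ c : Fin m → ℂ,
    0 ≤ ∑ i, ∑ j, c i * conj (c j) * k (z i) (z j)

/-- `k ∈ K_S` (with `X` the underlying set): `(z,w) ↦ (1 − ψ(z) conj(ψ(w))) k(z,w)` is a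
positive kernel for every `ψ ∈ S`. -/
def MemKS {α : Type*} (X : Set α) (S : Set (α → ℂ)) (k : α → α → ℂ) : Prop :=
  ∀ ψ ∈ S, IsPosKernelOn X (fun z w => (1 - ψ z * conj (ψ w)) * k z w)


section Stmt7Aux

open scoped Classical

namespace Stmt7Aux

variable {α : Type*}

lemma conj_nonneg {z : ℂ} (hz : 0 ≤ z) : 0 ≤ conj z := by
  rw [Complex.le_def] at hz ⊢
  constructor
  · simpa using hz.1
  · simpa using hz.2.symm

lemma conj_sum_flip {n : ℕ} (A : Fin n → Fin n → ℂ) (c : Fin n → ℂ) :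
    conj (∑ i, ∑ j, conj (c i) * c j * A i j)
      = ∑ i, ∑ j, c i * conj (c j) * conj (A i j) := by
  simp [map_sum]

lemma sum4_swap {m n : ℕ} (F : Fin m → Fin m → Fin n → Fin n → ℂ) :
    ∑ i, ∑ j, ∑ p, ∑ q, F i j p q = ∑ p, ∑ q, ∑ i, ∑ j, F i j p q :=
  calc ∑ i, ∑ j, ∑ p, ∑ q, F i j p q
      = ∑ i, ∑ p, ∑ j, ∑ q, F i j p q := Finset.sum_congr rfl fun _ _ => Finset.sum_comm
    _ = ∑ p, ∑ i, ∑ j, ∑ q, F i j p q := Finset.sum_comm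
    _ = ∑ p, ∑ q, ∑ i, ∑ j, F i j p q := Finset.sum_congr rfl fun p _ =>
        (calc ∑ i, ∑ j, ∑ q, F i j p q
            = ∑ i, ∑ q, ∑ j, F i j p q := Finset.sum_congr rfl fun _ _ => Finset.sum_comm
          _ = ∑ q, ∑ i, ∑ j, F i j p q := Finset.sum_comm)

/-- The kernel supported on the (distinct) points `lam p`, with matrix of values `K`. -/
def kerOf {n : ℕ} (lam : Fin n → α) (K : Fin n → Fin n → ℂ) : α → α → ℂ :=
  fun z w => ∑ p, ∑ q, (if z = lam p then 1 else 0) * (if w = lam q then 1 else 0) * K p q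

lemma kerOf_mul {n : ℕ} (lam : Fin n → α) (K : Fin n → Fin n → ℂ) (u : α → ℂ) (z w : α) :
    (1 - u z * conj (u w)) * kerOf lam K z w
      = kerOf lam (fun p q => (1 - u (lam p) * conj (u (lam q))) * K p q) z w := by
  unfold kerOf
  rw [Finset.mul_sum]
  refine Finset.sum_congr rfl fun p _ => ?_
  rw [Finset.mul_sum]
  refine Finset.sum_congr rfl fun q _ => ?_
  by_cases hz : z = lam p
  · by_cases hw : w = lam q
    · subst hz; subst hw; simp
    · simp [hw]
  · simp [hz]

lemma kerOf_apply {n : ℕ} (lam : Fin n → α) (hinj : Function.Injective lam)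
    (K : Fin n → Fin n → ℂ) (i j : Fin n) :
    kerOf lam K (lam i) (lam j) = K i j := by
  unfold kerOf
  simp [hinj.eq_iff, Finset.sum_ite_eq]

lemma kerOf_pos (X : Set α) {n : ℕ} (lam : Fin n → α) (K : Fin n → Fin n → ℂ)
    (h : ∀ c : Fin n → ℂ, 0 ≤ ∑ p, ∑ q, c p * conj (c q) * K p q) :
    IsPosKernelOn X (kerOf lam K) := by
  intro m z _ c
  have key : ∑ i, ∑ j, c i * conj (c j) * kerOf lam K (z i) (z j)
      = ∑ p, ∑ q, (∑ i, c i * (if z i = lam p then 1 else 0)) *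
          conj (∑ j, c j * (if z j = lam q then 1 else 0)) * K p q := by
    unfold kerOf
    have lhs : ∑ i, ∑ j, c i * conj (c j) *
        (∑ p, ∑ q, (if z i = lam p then 1 else 0) * (if z j = lam q then 1 else 0) * K p q)
        = ∑ i, ∑ j, ∑ p, ∑ q, (c i * (if z i = lam p then 1 else 0)) *
            (conj (c j) * (if z j = lam q then 1 else 0)) * K p q := by
      refine Finset.sum_congr rfl fun i _ => Finset.sum_congr rfl fun j _ => ?_
      rw [Finset.mul_sum]
      refine Finset.sum_congr rfl fun p _ => ?_
      rw [Finset.mul_sum]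
      refine Finset.sum_congr rfl fun q _ => ?_
      ring
    rw [lhs, sum4_swap]
    refine Finset.sum_congr rfl fun p _ => Finset.sum_congr rfl fun q _ => ?_
    rw [map_sum, Finset.sum_mul_sum, Finset.sum_mul]
    refine Finset.sum_congr rfl fun i _ => ?_
    rw [Finset.sum_mul]
    refine Finset.sum_congr rfl fun j _ => ?_
    rw [map_mul]
    have : conj ((if z j = lam q then 1 else 0) : ℂ) = (if z j = lam q then 1 else 0) := by
      split <;> simp
    rw [this]
  rw [key]
  exact h _

variable {d : ℕ} {Ω : Set (Fin d → ℂ)}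

lemma isUnit_P (T : GenTuple d Ω) : IsUnit T.P := by
  rw [← Matrix.linearIndependent_cols_iff_isUnit]
  exact T.indep

lemma dot_id {n : ℕ} (P : Matrix (Fin n) (Fin n) ℂ) (a b : Fin n → ℂ) :
    dotProduct (star (P.mulVec a)) (P.mulVec b)
      = ∑ i, ∑ j, conj (a i) * b j * (Matrix.conjTranspose P * P) i j := by
  rw [Matrix.star_mulVec, Matrix.dotProduct_mulVec, Matrix.vecMul_vecMul]
  simp only [dotProduct, Matrix.vecMul, Finset.sum_mul, Pi.star_apply, RCLike.star_def]
  rw [Finset.sum_comm]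
  exact Finset.sum_congr rfl fun i _ => Finset.sum_congr rfl fun j _ => by ring

lemma dot_sq {n : ℕ} (y : Fin n → ℂ) :
    dotProduct (star y) y
      = ((‖(WithLp.equiv 2 (Fin n → ℂ)).symm y‖ : ℝ) : ℂ) ^ 2 := by
  rw [WithLp.equiv_symm_apply, dotProduct_comm, ← EuclideanSpace.inner_toLp_toLp]
  exact inner_self_eq_norm_sq_to_K _

lemma opNorm_le_one_iff (T : GenTuple d Ω) (f : (Fin d → ℂ) → ℂ) :
    T.opNorm f ≤ 1 ↔ ∀ c : Fin T.n → ℂ,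
      0 ≤ ∑ i, ∑ j, conj (c i) * c j *
        ((1 - conj (f (T.lam i)) * f (T.lam j)) * (Matrix.conjTranspose T.P * T.P) i j) := by
  classical
  set n := T.n
  set P := T.P with hPdef
  set D : Matrix (Fin n) (Fin n) ℂ := Matrix.diagonal fun j => f (T.lam j) with hD
  have hP : IsUnit P := isUnit_P T
  have hdet : IsUnit P.det := (Matrix.isUnit_iff_isUnit_det _).mp hP
  have hPinv : P⁻¹ * P = 1 := Matrix.nonsing_inv_mul _ hdet
  have evalvec : ∀ c : Fin n → ℂ,
      (T.evalM f).mulVec (P.mulVec c) = P.mulVec (D.mulVec c) := by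
    intro c
    rw [Matrix.mulVec_mulVec, Matrix.mulVec_mulVec]
    have he : T.evalM f * P = P * D := by
      show P * D * P⁻¹ * P = P * D
      rw [Matrix.mul_assoc (P * D), hPinv, Matrix.mul_one]
    rw [he]
  have sum_id : ∀ c : Fin n → ℂ,
      ∑ i, ∑ j, conj (c i) * c j *
          ((1 - conj (f (T.lam i)) * f (T.lam j)) * (Matrix.conjTranspose P * P) i j)
        = dotProduct (star (P.mulVec c)) (P.mulVec c)
          - dotProduct (star (P.mulVec (D.mulVec c))) (P.mulVec (D.mulVec c)) := by
    intro c
    rw [dot_id, dot_id, ← Finset.sum_sub_distrib]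
    refine Finset.sum_congr rfl fun i _ => ?_
    rw [← Finset.sum_sub_distrib]
    refine Finset.sum_congr rfl fun j _ => ?_
    have hDi : D.mulVec c i = f (T.lam i) * c i := Matrix.mulVec_diagonal _ _ _
    have hDj : D.mulVec c j = f (T.lam j) * c j := Matrix.mulVec_diagonal _ _ _
    rw [hDi, hDj, map_mul]
    ring
  set L := Matrix.toEuclideanCLM (𝕜 := ℂ) (T.evalM f) with hL
  have hLx : ∀ y : Fin n → ℂ,
      L ((WithLp.equiv 2 (Fin n → ℂ)).symm y)
        = (WithLp.equiv 2 (Fin n → ℂ)).symm ((T.evalM f).mulVec y) := by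
    intro y
    exact Matrix.toEuclideanCLM_toLp _ _
  have key : ∀ c : Fin n → ℂ,
      ∑ i, ∑ j, conj (c i) * c j *
          ((1 - conj (f (T.lam i)) * f (T.lam j)) * (Matrix.conjTranspose P * P) i j)
        = ((‖(WithLp.equiv 2 (Fin n → ℂ)).symm (P.mulVec c)‖ : ℝ) : ℂ) ^ 2
          - ((‖L ((WithLp.equiv 2 (Fin n → ℂ)).symm (P.mulVec c))‖ : ℝ) : ℂ) ^ 2 := by
    intro c
    rw [sum_id, dot_sq, dot_sq, hLx, evalvec]
  constructor
  · intro h c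
    rw [key]
    have hb : ‖L ((WithLp.equiv 2 (Fin n → ℂ)).symm (P.mulVec c))‖
        ≤ ‖(WithLp.equiv 2 (Fin n → ℂ)).symm (P.mulVec c)‖ := by
      calc ‖L ((WithLp.equiv 2 (Fin n → ℂ)).symm (P.mulVec c))‖
          ≤ ‖L‖ * ‖(WithLp.equiv 2 (Fin n → ℂ)).symm (P.mulVec c)‖ := L.le_opNorm _
        _ ≤ 1 * ‖(WithLp.equiv 2 (Fin n → ℂ)).symm (P.mulVec c)‖ :=
            mul_le_mul_of_nonneg_right h (norm_nonneg _)
        _ = _ := one_mul _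
    have hsq : ‖L ((WithLp.equiv 2 (Fin n → ℂ)).symm (P.mulVec c))‖ ^ 2
        ≤ ‖(WithLp.equiv 2 (Fin n → ℂ)).symm (P.mulVec c)‖ ^ 2 :=
      pow_le_pow_left₀ (norm_nonneg _) hb 2
    rw [← Complex.ofReal_pow, ← Complex.ofReal_pow, ← Complex.ofReal_sub,
      Complex.zero_le_real]
    linarith
  · intro h
    refine ContinuousLinearMap.opNorm_le_bound _ zero_le_one ?_
    intro x
    obtain ⟨c, hc⟩ := Matrix.mulVec_surjective_iff_isUnit.mpr hP (WithLp.equiv 2 (Fin n → ℂ) x)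
    have hx : (WithLp.equiv 2 (Fin n → ℂ)).symm (P.mulVec c) = x := by
      rw [hc]; exact (WithLp.equiv 2 (Fin n → ℂ)).symm_apply_apply x
    have hkey := h c
    rw [key, hx, ← Complex.ofReal_pow, ← Complex.ofReal_pow, ← Complex.ofReal_sub,
      Complex.zero_le_real, sub_nonneg] at hkey
    rw [one_mul]
    nlinarith [norm_nonneg (L x), norm_nonneg x]

end Stmt7Aux

end Stmt7Aux

/-- if `(1 − φ(z) conj(φ(w))) k(z,w)` is positive for every `k ∈ K_S`, then
`‖φ(T)‖ ≤ 1` for every generic matrix `d`-tuple `T` on `Ω` with `‖ψ(T)‖ ≤ 1` for all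
`ψ ∈ S`. -/
theorem stmt7 {d : ℕ} (Ω : Set (Fin d → ℂ)) (hΩopen : IsOpen Ω)
    (hΩbdd : Bornology.IsBounded Ω)
    (S : Set ((Fin d → ℂ) → ℂ))
    (hShol : ∀ ψ ∈ S, DifferentiableOn ℂ ψ Ω)
    (hSD : ∀ ψ ∈ S, ∀ z ∈ Ω, ‖ψ z‖ < 1)
    (φ : (Fin d → ℂ) → ℂ)
    (hφ : ∀ k, MemKS Ω S k →
      IsPosKernelOn Ω (fun z w => (1 - φ z * conj (φ w)) * k z w)) :
    ∀ T : GenTuple d Ω, (∀ ψ ∈ S, T.opNorm ψ ≤ 1) → T.opNorm φ ≤ 1 := by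
  intro T hT
  classical
  -- the matrix of kernel values: the conjugate of the Gram matrix of the eigenvectors
  let K : Fin T.n → Fin T.n → ℂ :=
    fun p q => conj ((Matrix.conjTranspose T.P * T.P) p q)
  -- the kernel supported on the joint eigenvalues
  have hks : MemKS Ω S (Stmt7Aux.kerOf T.lam K) := by
    intro ψ hψ
    have h2 := (Stmt7Aux.opNorm_le_one_iff T ψ).1 (hT ψ hψ)
    have h3 : ∀ c : Fin T.n → ℂ, 0 ≤ ∑ i, ∑ j, c i * conj (c j) *
        ((1 - ψ (T.lam i) * conj (ψ (T.lam j))) * K i j) := by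
      intro c
      have h4 := Stmt7Aux.conj_nonneg (h2 c)
      rw [Stmt7Aux.conj_sum_flip] at h4
      refine le_of_le_of_eq h4 (Finset.sum_congr rfl fun i _ =>
        Finset.sum_congr rfl fun j _ => ?_)
      simp only [K, map_mul, map_sub, map_one, Complex.conj_conj]
    have hpos := Stmt7Aux.kerOf_pos Ω T.lam
      (fun p q => (1 - ψ (T.lam p) * conj (ψ (T.lam q))) * K p q) h3
    intro m z hz c
    have h5 := hpos m z hz c
    refine le_of_le_of_eq h5 (Finset.sum_congr rfl fun i _ =>
      Finset.sum_congr rfl fun j _ => ?_)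
    rw [← Stmt7Aux.kerOf_mul]
  have h4 := hφ _ hks
  have h5 : ∀ c : Fin T.n → ℂ, 0 ≤ ∑ i, ∑ j, c i * conj (c j) *
      ((1 - φ (T.lam i) * conj (φ (T.lam j))) * K i j) := by
    intro c
    have h6 := h4 T.n T.lam T.mem c
    refine le_of_le_of_eq h6 (Finset.sum_congr rfl fun i _ =>
      Finset.sum_congr rfl fun j _ => ?_)
    simp only [Stmt7Aux.kerOf_apply T.lam T.inj]
  have h6 : ∀ c : Fin T.n → ℂ, 0 ≤ ∑ i, ∑ j, conj (c i) * c j *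
      ((1 - conj (φ (T.lam i)) * φ (T.lam j)) * (Matrix.conjTranspose T.P * T.P) i j) := by
    intro c
    have hS : conj (∑ i, ∑ j, conj (c i) * c j *
        ((1 - conj (φ (T.lam i)) * φ (T.lam j)) * (Matrix.conjTranspose T.P * T.P) i j))
        = ∑ i, ∑ j, c i * conj (c j) *
          ((1 - φ (T.lam i) * conj (φ (T.lam j))) * K i j) := by
      rw [Stmt7Aux.conj_sum_flip]
      refine Finset.sum_congr rfl fun i _ => Finset.sum_congr rfl fun j _ => ?_
      simp only [K, map_mul, map_sub, map_one, Complex.conj_conj]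
    have h7 : 0 ≤ conj (∑ i, ∑ j, conj (c i) * c j *
        ((1 - conj (φ (T.lam i)) * φ (T.lam j)) *
          (Matrix.conjTranspose T.P * T.P) i j)) := by
      rw [hS]; exact h5 c
    have h8 := Stmt7Aux.conj_nonneg h7
    rwa [Complex.conj_conj] at h8
  exact (Stmt7Aux.opNorm_le_one_iff T φ).2 h6
end
end

section
/- Let K and L be complex Hilbert spaces and let V : K ⊕ L → K ⊕ L be a unitary operator with block decomposition V = [[A, B],[C, D]], where A : K → K, B : L → K, C : K → L, and D : L → L are bounded linear operators. Let Z be a bounded linear operator on L with ‖Z‖ ≤ 1 such that I_L − D Z is invertible. Then the bounded operator A + B Z (I_L − D Z)^{-1} C on K has operator norm at most 1. -/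
noncomputable section

/-- if `V = [[A,B],[C,D]]` is a unitary on the Hilbert-space direct sum
`K ⊕ L` and `Z : L → L` is a contraction with `I − DZ` invertible, then the transfer
function `A + B Z (I − D Z)⁻¹ C` is a contraction on `K`. -/
theorem stmt11 (K : Type*) (L : Type*)
    [NormedAddCommGroup K] [InnerProductSpace ℂ K] [CompleteSpace K]
    [NormedAddCommGroup L] [InnerProductSpace ℂ L] [CompleteSpace L]
    (V : WithLp 2 (K × L) ≃ₗᵢ[ℂ] WithLp 2 (K × L))
    (A : K →L[ℂ] K) (B : L →L[ℂ] K) (C : K →L[ℂ] L) (D : L →L[ℂ] L)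
    (hV : ∀ (x : K) (y : L),
      V ((WithLp.equiv 2 (K × L)).symm (x, y)) =
        (WithLp.equiv 2 (K × L)).symm (A x + B y, C x + D y))
    (Z : L →L[ℂ] L) (hZ : ‖Z‖ ≤ 1)
    (hinv : IsUnit ((1 : L →L[ℂ] L) - D ∘L Z)) :
    ‖A + B ∘L Z ∘L Ring.inverse ((1 : L →L[ℂ] L) - D ∘L Z) ∘L C‖ ≤ 1 := by
  set E := (1 : L →L[ℂ] L) - D ∘L Z with hE
  apply ContinuousLinearMap.opNorm_le_bound _ zero_le_one
  intro x
  rw [one_mul]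
  set w : L := Ring.inverse E (C x) with hw
  have hEw : E w = C x := by
    have := Ring.mul_inverse_cancel E hinv
    calc E w = (E * Ring.inverse E) (C x) := rfl
    _ = C x := by rw [this]; rfl
  have hw2 : C x + D (Z w) = w := by
    have : w - D (Z w) = C x := by
      simpa [hE, ContinuousLinearMap.sub_apply] using hEw
    rw [← this]; abel
  have hnorm : ‖V ((WithLp.equiv 2 (K × L)).symm (x, Z w))‖ =
      ‖(WithLp.equiv 2 (K × L)).symm (x, Z w)‖ := V.norm_map _
  rw [hV x (Z w)] at hnorm
  have h1 : ‖A x + B (Z w)‖ ^ 2 + ‖C x + D (Z w)‖ ^ 2 = ‖x‖ ^ 2 + ‖Z w‖ ^ 2 := by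
    have e1 := WithLp.prod_norm_sq_eq_of_L2 ((WithLp.equiv 2 (K × L)).symm (A x + B (Z w), C x + D (Z w)))
    have e2 := WithLp.prod_norm_sq_eq_of_L2 ((WithLp.equiv 2 (K × L)).symm (x, Z w))
    simp only [WithLp.equiv_symm_apply, WithLp.toLp_fst, WithLp.toLp_snd] at e1 e2 hnorm
    rw [← e1, ← e2, hnorm]
  rw [hw2] at h1
  have hZw : ‖Z w‖ ≤ ‖w‖ := by
    calc ‖Z w‖ ≤ ‖Z‖ * ‖w‖ := Z.le_opNorm w
    _ ≤ 1 * ‖w‖ := by gcongr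
    _ = ‖w‖ := one_mul _
  have key : ‖A x + B (Z w)‖ ≤ ‖x‖ := by
    have h2 : ‖A x + B (Z w)‖ ^ 2 ≤ ‖x‖ ^ 2 := by nlinarith [norm_nonneg w, norm_nonneg (Z w)]
    nlinarith [norm_nonneg (A x + B (Z w)), norm_nonneg x]
  simpa [ContinuousLinearMap.add_apply, ContinuousLinearMap.comp_apply] using key
end
end
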